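/- arXiv:2507.06491 — 6 statements merged into one kernel-verified Lean document; each statement's English description precedes it below -/
import Mathlib

section
/- Let a, b : [0,∞) → ℝ be continuous with a(t) ≥ a_min for all t ≥ 0, where a_min > 0 is a constant. Let y1, y2 : [0,∞) → ℝ be differentiable with 0 < y1(t) ≤ M and 0 < y2(t) ≤ M for all t ≥ 0 for some constant M > 0, and suppose y1′(t) = y1(t)(a(t) − b(t)·y1(t)) and y2′(t) = y2(t)(a(t) − b(t)·y2(t)) for all t ≥ 0. Then y1(t) − y2(t) → 0 as t → ∞. -/
/-!
For a solution `y > 0` of `y' = y (a - b y)`, the reciprocal `1 / y` solves the linear equation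
`w' = b - a w`, so `u = 1 / y₁ - 1 / y₂` solves `u' = -a u`. Since `a ≥ a_min > 0`,
`u² e^{2 a_min t}` is nonincreasing and `u` decays exponentially. Finally
`y₁ - y₂ = y₁ y₂ (1 / y₂ - 1 / y₁)` with `|y₁ y₂| ≤ M²`.
-/

open Filter Set Real Topology

theorem HasDerivWithinAt.inv_of_logistic {y a b : ℝ → ℝ} {s : Set ℝ} {t : ℝ}
    (hy : HasDerivWithinAt y (y t * (a t - b t * y t)) s t) (hyt : y t ≠ 0) :
    HasDerivWithinAt (fun t => (y t)⁻¹) (b t - a t * (y t)⁻¹) s t := by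
  refine (hy.inv hyt).congr_deriv ?_
  field_simp
  ring

theorem HasDerivWithinAt.inv_sub_inv_of_logistic {y₁ y₂ a b : ℝ → ℝ} {s : Set ℝ} {t : ℝ}
    (hy₁ : HasDerivWithinAt y₁ (y₁ t * (a t - b t * y₁ t)) s t) (hy₁t : y₁ t ≠ 0)
    (hy₂ : HasDerivWithinAt y₂ (y₂ t * (a t - b t * y₂ t)) s t) (hy₂t : y₂ t ≠ 0) :
    HasDerivWithinAt (fun t => (y₁ t)⁻¹ - (y₂ t)⁻¹) (-a t * ((y₁ t)⁻¹ - (y₂ t)⁻¹)) s t := by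
  refine ((hy₁.inv_of_logistic hy₁t).sub (hy₂.inv_of_logistic hy₂t)).congr_deriv ?_
  ring

section LinearDecay

variable {u a : ℝ → ℝ} {c : ℝ}

theorem antitoneOn_sq_mul_exp_of_hasDerivWithinAt_neg_mul
    (hu : ∀ t ∈ Ici (0 : ℝ), HasDerivWithinAt u (-a t * u t) (Ici 0) t)
    (hca : ∀ t ∈ Ici (0 : ℝ), c ≤ a t) :
    AntitoneOn (fun t => u t ^ 2 * exp (2 * c * t)) (Ici 0) := by
  have hderiv : ∀ t ∈ Ici (0 : ℝ), HasDerivWithinAt (fun t => u t ^ 2 * exp (2 * c * t))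
      (2 * u t ^ 2 * exp (2 * c * t) * (c - a t)) (Ici 0) t := by
    intro t ht
    refine (((hu t ht).pow 2).mul
      ((hasDerivAt_id t).const_mul (2 * c)).exp.hasDerivWithinAt).congr_deriv ?_
    simp only [id, Pi.pow_apply]
    push_cast
    ring
  refine antitoneOn_of_hasDerivWithinAt_nonpos (convex_Ici 0)
    (HasDerivWithinAt.continuousOn hderiv)
    (fun t ht => (hderiv t (interior_subset ht)).mono interior_subset) (fun t ht => ?_)
  have := hca t (interior_subset ht)
  exact mul_nonpos_of_nonneg_of_nonpos (by positivity) (by linarith)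

theorem abs_le_mul_exp_of_hasDerivWithinAt_neg_mul
    (hu : ∀ t ∈ Ici (0 : ℝ), HasDerivWithinAt u (-a t * u t) (Ici 0) t)
    (hca : ∀ t ∈ Ici (0 : ℝ), c ≤ a t) {t : ℝ} (ht : 0 ≤ t) :
    |u t| ≤ |u 0| * exp (-(c * t)) := by
  have hmono := antitoneOn_sq_mul_exp_of_hasDerivWithinAt_neg_mul hu hca self_mem_Ici ht ht
  simp only [mul_zero, exp_zero, mul_one] at hmono
  have hsq : u t ^ 2 ≤ (|u 0| * exp (-(c * t))) ^ 2 := by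
    have hexp : exp (2 * c * t) * exp (-(c * t)) ^ 2 = 1 := by
      rw [← exp_nat_mul, ← exp_add]; ring_nf; exact exp_zero
    calc u t ^ 2 = u t ^ 2 * exp (2 * c * t) * exp (-(c * t)) ^ 2 := by
          rw [mul_assoc, hexp, mul_one]
      _ ≤ u 0 ^ 2 * exp (-(c * t)) ^ 2 := by gcongr
      _ = (|u 0| * exp (-(c * t))) ^ 2 := by rw [mul_pow, sq_abs]
  simpa [abs_of_nonneg (by positivity : 0 ≤ |u 0| * exp (-(c * t)))] using sq_le_sq.1 hsq

theorem tendsto_zero_of_hasDerivWithinAt_neg_mul (hc : 0 < c)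
    (hu : ∀ t ∈ Ici (0 : ℝ), HasDerivWithinAt u (-a t * u t) (Ici 0) t)
    (hca : ∀ t ∈ Ici (0 : ℝ), c ≤ a t) :
    Tendsto u atTop (𝓝 0) := by
  have hexp : Tendsto (fun t => |u 0| * exp (-(c * t))) atTop (𝓝 0) := by
    simpa using (tendsto_exp_atBot.comp (tendsto_neg_atTop_atBot.comp
      (tendsto_id.const_mul_atTop hc))).const_mul |u 0|
  refine squeeze_zero_norm' ?_ hexp
  filter_upwards [eventually_ge_atTop 0] with t ht
  exact abs_le_mul_exp_of_hasDerivWithinAt_neg_mul hu hca ht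

end LinearDecay

theorem tendsto_sub_of_tendsto_inv_sub {α : Type*} {l : Filter α} {y₁ y₂ : α → ℝ} {M : ℝ}
    (hy₁ : ∀ᶠ t in l, y₁ t ≠ 0 ∧ |y₁ t| ≤ M) (hy₂ : ∀ᶠ t in l, y₂ t ≠ 0 ∧ |y₂ t| ≤ M)
    (h : Tendsto (fun t => (y₁ t)⁻¹ - (y₂ t)⁻¹) l (𝓝 0)) :
    Tendsto (fun t => y₁ t - y₂ t) l (𝓝 0) := by
  refine squeeze_zero_norm' ?_ (by simpa using h.norm.const_mul (M ^ 2))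
  filter_upwards [hy₁, hy₂] with t ⟨h₁, hM₁⟩ ⟨h₂, hM₂⟩
  have hM : 0 ≤ M := (abs_nonneg _).trans hM₁
  have hprod : |y₁ t * y₂ t| ≤ M ^ 2 := by
    rw [abs_mul, sq]; exact mul_le_mul hM₁ hM₂ (abs_nonneg _) hM
  calc ‖y₁ t - y₂ t‖ = |y₁ t * y₂ t| * ‖(y₁ t)⁻¹ - (y₂ t)⁻¹‖ := by
        rw [Real.norm_eq_abs, Real.norm_eq_abs, ← abs_mul, abs_sub_comm]
        congr 1
        field_simp
    _ ≤ M ^ 2 * ‖(y₁ t)⁻¹ - (y₂ t)⁻¹‖ := by gcongr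

theorem logistic_solutions_asymptotic_general
    (a b : ℝ → ℝ) (aMin : ℝ) (haMin : 0 < aMin)
    (ha_lb : ∀ t, 0 ≤ t → aMin ≤ a t)
    (M : ℝ)
    (y1 y2 : ℝ → ℝ)
    (hy1pos : ∀ t, 0 ≤ t → 0 < y1 t) (hy1ub : ∀ t, 0 ≤ t → y1 t ≤ M)
    (hy2pos : ∀ t, 0 ≤ t → 0 < y2 t) (hy2ub : ∀ t, 0 ≤ t → y2 t ≤ M)
    (hd1 : ∀ t, 0 ≤ t → HasDerivWithinAt y1 (y1 t * (a t - b t * y1 t)) (Set.Ici 0) t)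
    (hd2 : ∀ t, 0 ≤ t → HasDerivWithinAt y2 (y2 t * (a t - b t * y2 t)) (Set.Ici 0) t) :
    Tendsto (fun t => y1 t - y2 t) atTop (nhds 0) := by
  have hinv : Tendsto (fun t => (y1 t)⁻¹ - (y2 t)⁻¹) atTop (𝓝 0) :=
    tendsto_zero_of_hasDerivWithinAt_neg_mul haMin
      (fun t ht => (hd1 t ht).inv_sub_inv_of_logistic (hy1pos t ht).ne' (hd2 t ht)
        (hy2pos t ht).ne')
      ha_lb
  refine tendsto_sub_of_tendsto_inv_sub (M := M) ?_ ?_ hinv <;>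
    filter_upwards [eventually_ge_atTop 0] with t ht
  · exact ⟨(hy1pos t ht).ne', by rw [abs_of_pos (hy1pos t ht)]; exact hy1ub t ht⟩
  · exact ⟨(hy2pos t ht).ne', by rw [abs_of_pos (hy2pos t ht)]; exact hy2ub t ht⟩

/-- Two positive bounded solutions of the time-dependent logistic equation
`y' = y (a(t) - b(t) y)` with `a(t) ≥ a_min > 0` are asymptotic: `y1(t) - y2(t) → 0`. -/
theorem logistic_solutions_asymptotic
    (a b : ℝ → ℝ) (aMin : ℝ) (haMin : 0 < aMin)
    (ha : ContinuousOn a (Set.Ici 0)) (hb : ContinuousOn b (Set.Ici 0))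
    (ha_lb : ∀ t, 0 ≤ t → aMin ≤ a t)
    (M : ℝ) (hM : 0 < M)
    (y1 y2 : ℝ → ℝ)
    (hy1pos : ∀ t, 0 ≤ t → 0 < y1 t) (hy1ub : ∀ t, 0 ≤ t → y1 t ≤ M)
    (hy2pos : ∀ t, 0 ≤ t → 0 < y2 t) (hy2ub : ∀ t, 0 ≤ t → y2 t ≤ M)
    (hd1 : ∀ t, 0 ≤ t → HasDerivWithinAt y1 (y1 t * (a t - b t * y1 t)) (Set.Ici 0) t)
    (hd2 : ∀ t, 0 ≤ t → HasDerivWithinAt y2 (y2 t * (a t - b t * y2 t)) (Set.Ici 0) t) :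
    Tendsto (fun t => y1 t - y2 t) atTop (nhds 0) :=
  logistic_solutions_asymptotic_general a b aMin haMin ha_lb M y1 y2 hy1pos hy1ub hy2pos hy2ub hd1
    hd2
end

section
/- Let a, b : [0,∞) → ℝ be continuous with a(t) ≤ a_max and b(t) ≥ b_min for all t ≥ 0, where a_max and b_min > 0 are constants. Let y0 > 0 and let y : [0,∞) → ℝ be differentiable with y(0) = y0 and y′(t) = y(t)(a(t) − b(t)·y(t)) for all t ≥ 0. Then for every t ≥ 0, 0 < y(t) ≤ max{a_max/b_min, y0}. -/
/-!
Positivity: along the solution, `y` solves the linear equation `y' = g y` with the continuous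
coefficient `g = a - b y`, so `y t = y 0 * exp (∫₀ᵗ g) > 0`.

Upper bound: with `B = max (aMax / bMin) y0`, whenever `y t > B` we have
`b t * y t ≥ bMin * y t > aMax ≥ a t`, so `y' t < 0`; a function starting below `B` that
decreases whenever it is above `B` never exceeds `B`.
-/

open Set Real

theorem hasDerivWithinAt_primitive_of_continuousOn {g : ℝ → ℝ} {t₀ u : ℝ} (hg : ContinuousOn g (Ici t₀))
    (hu : u ∈ Ici t₀) : HasDerivWithinAt (fun v => ∫ s in t₀..v, g s) (g u) (Ici u) u := by
  have hsub : Ioi u ⊆ Ici t₀ := Ioi_subset_Ici_self.trans (Ici_subset_Ici.mpr hu)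
  exact intervalIntegral.integral_hasDerivWithinAt_right
    ((hg.mono Icc_subset_Ici_self).intervalIntegrable_of_Icc hu)
    ((hg.mono hsub).stronglyMeasurableAtFilter_nhdsWithin measurableSet_Ioi u)
    ((hg u hu).mono hsub)

theorem continuousOn_primitive_of_continuousOn {g : ℝ → ℝ} {t₀ t : ℝ} (hg : ContinuousOn g (Ici t₀))
    (ht : t₀ ≤ t) : ContinuousOn (fun v => ∫ s in t₀..v, g s) (Icc t₀ t) := by
  have hi : IntervalIntegrable g MeasureTheory.volume t₀ t :=
    (hg.mono Icc_subset_Ici_self).intervalIntegrable_of_Icc ht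
  have := intervalIntegral.continuousOn_primitive_interval' hi left_mem_uIcc
  rwa [uIcc_of_le ht] at this

theorem eq_mul_exp_integral_of_hasDerivWithinAt {y g : ℝ → ℝ} {t₀ : ℝ}
    (hg : ContinuousOn g (Ici t₀))
    (hy : ∀ t ∈ Ici t₀, HasDerivWithinAt y (y t * g t) (Ici t₀) t) :
    ∀ t ∈ Ici t₀, y t = y t₀ * exp (∫ s in t₀..t, g s) := by
  intro t ht
  let G : ℝ → ℝ := fun v => ∫ s in t₀..v, g s
  have hconst : ∀ v ∈ Icc t₀ t, y v * exp (-G v) = y t₀ * exp (-G t₀) := by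
    refine constant_of_has_deriv_right_zero (fun v hv => ?_) (fun v hv => ?_)
    · exact ((hy v hv.1).continuousWithinAt.mono Icc_subset_Ici_self).mul
        ((continuousOn_primitive_of_continuousOn hg ht v hv).neg.rexp)
    · have h : HasDerivWithinAt (fun v => y v * exp (-G v))
          (y v * g v * exp (-G v) + y v * (exp (-G v) * -g v)) (Ici v) v :=
        ((hy v hv.1).mono (Ici_subset_Ici.mpr hv.1)).mul
          (hasDerivWithinAt_primitive_of_continuousOn hg hv.1).neg.exp
      exact h.congr_deriv (by ring)
  have h := hconst t ⟨ht, le_rfl⟩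
  simp only [G, intervalIntegral.integral_same, neg_zero, exp_zero, mul_one] at h
  rw [← h, mul_assoc, ← exp_add, neg_add_cancel, exp_zero, mul_one]

/-- The barrier `B + δ (1 + (s - t₀))` has slope `δ > 0 ≥ f'` wherever `f` touches it, since it
lies strictly above `B`; letting `δ → 0` gives the claim. -/
theorem le_of_hasDerivWithinAt_nonpos_of_lt {f f' : ℝ → ℝ} {t₀ B : ℝ}
    (hf : ∀ t ∈ Ici t₀, HasDerivWithinAt f (f' t) (Ici t₀) t) (h₀ : f t₀ ≤ B)
    (hB : ∀ t ∈ Ici t₀, B < f t → f' t ≤ 0) : ∀ t ∈ Ici t₀, f t ≤ B := by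
  intro t ht
  have hL : 0 < 1 + (t - t₀) := by linarith [show t₀ ≤ t from ht]
  refine le_of_forall_pos_le_add fun ε hε => ?_
  set δ := ε / (1 + (t - t₀))
  have hδ : 0 < δ := div_pos hε hL
  have hfence := image_le_of_deriv_right_lt_deriv_boundary' (a := t₀) (b := t)
    (B := fun s => B + δ * (1 + (s - t₀))) (B' := fun _ => δ)
    (fun s hs => (hf s hs.1).continuousWithinAt.mono Icc_subset_Ici_self)
    (fun s hs => (hf s hs.1).mono (Ici_subset_Ici.mpr hs.1))
    (by simp only [sub_self, add_zero, mul_one]; linarith)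
    (by fun_prop)
    (fun s _ => ((hasDerivWithinAt_id s _).sub_const t₀).const_add 1 |>.const_mul δ
      |>.const_add B |>.congr_deriv (by ring))
    (fun s hs hfs => (hB s hs.1 (by
      rw [hfs]; linarith [mul_pos hδ (show 0 < 1 + (s - t₀) by linarith [hs.1])])).trans_lt hδ)
    ⟨ht, le_rfl⟩
  calc f t ≤ B + δ * (1 + (t - t₀)) := hfence
    _ = B + ε := by rw [div_mul_cancel₀ _ hL.ne']

/-- A solution of the time-dependent logistic equation
`y' = y (a(t) - b(t) y)` with `a(t) ≤ a_max`, `b(t) ≥ b_min > 0` and positive initial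
datum stays positive and bounded by `max (a_max / b_min) y0`. -/
theorem logistic_time_dependent_bounds
    (a b : ℝ → ℝ) (aMax bMin : ℝ) (hbMin : 0 < bMin)
    (ha : ContinuousOn a (Set.Ici 0)) (hb : ContinuousOn b (Set.Ici 0))
    (ha_ub : ∀ t, 0 ≤ t → a t ≤ aMax) (hb_lb : ∀ t, 0 ≤ t → bMin ≤ b t)
    (y0 : ℝ) (hy0 : 0 < y0)
    (y : ℝ → ℝ) (hinit : y 0 = y0)
    (hderiv : ∀ t, 0 ≤ t → HasDerivWithinAt y (y t * (a t - b t * y t)) (Set.Ici 0) t) :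
    ∀ t, 0 ≤ t → 0 < y t ∧ y t ≤ max (aMax / bMin) y0 := by
  have hy : ContinuousOn y (Ici 0) := fun t ht => (hderiv t ht).continuousWithinAt
  have hsol := eq_mul_exp_integral_of_hasDerivWithinAt (ha.sub (hb.mul hy)) hderiv
  have hbound := le_of_hasDerivWithinAt_nonpos_of_lt hderiv (hinit.trans_le (le_max_right _ _))
    fun t ht hyt => by
      have hyt_pos : 0 < y t := hy0.trans_le (le_max_right _ _) |>.trans hyt
      have hbt : aMax < b t * y t := calc
        aMax < bMin * y t := (div_lt_iff₀' hbMin).mp ((le_max_left _ _).trans_lt hyt)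
        _ ≤ b t * y t := mul_le_mul_of_nonneg_right (hb_lb t ht) hyt_pos.le
      exact mul_nonpos_of_nonneg_of_nonpos hyt_pos.le (by linarith [ha_ub t ht])
  intro t ht
  refine ⟨?_, hbound t ht⟩
  rw [hsol t ht, hinit]
  positivity
end

section
/- Let (σ_n)_{n≥1} be a sequence of independent random variables on a probability space such that for every n, σ_{2n+1} is exponentially distributed with rate α and σ_{2n} is exponentially distributed with rate β, where α, β > 0. Then for any real numbers 0 < s1 < s2 and 0 < s3 < s4, with probability 1 there exist infinitely many n with s1 < σ_n < s2 and s3 < σ_{n+1} < s4. -/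
/-!
The events `A k = {σ (2k+1) ∈ (s1, s2), σ (2k+2) ∈ (s3, s4)}` are built from disjoint pairs of
the independent sojourn times, so they are themselves independent, and each has the same
probability `P(Exp(α) ∈ (s1, s2)) · P(Exp(β) ∈ (s3, s4)) > 0`. Their probabilities therefore sum
to `∞`, and the second Borel–Cantelli lemma puts almost every `ω` in infinitely many `A k`.
-/

open Filter MeasureTheory ProbabilityTheory Set Function
open scoped ENNReal

namespace ProbabilityTheory

variable {Ω : Type*} [MeasurableSpace Ω] {μ : Measure Ω}

lemma expMeasure_Ioo_pos {r a b : ℝ} (hr : 0 < r) (hb : 0 < b) (hab : a < b) :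
    0 < expMeasure r (Ioo a b) := by
  rw [expMeasure, gammaMeasure, withDensity_apply _ measurableSet_Ioo,
    setLIntegral_pos_iff (f := gammaPDF 1 r) (measurable_gammaPDFReal 1 r).ennreal_ofReal]
  calc (0 : ℝ≥0∞) < volume (Ioo (max a 0) b) := by simp [hb, hab]
    _ ≤ _ := by
      refine measure_mono fun x hx => ⟨?_, (max_lt_iff.1 hx.1).1, hx.2⟩
      have hx0 : 0 < x := (max_lt_iff.1 hx.1).2
      change exponentialPDF r x ≠ 0
      rw [exponentialPDF_of_nonneg hx0.le]
      simp only [ne_eq, ENNReal.ofReal_eq_zero, not_le]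
      positivity

lemma iIndepFun.iIndepSet_biInter_preimage {ι κ : Type*} {β : ι → Type*}
    {mβ : ∀ i, MeasurableSpace (β i)} {f : ∀ i, Ω → β i}
    (hf : iIndepFun f μ) (hfm : ∀ i, Measurable (f i))
    {S : ∀ i, Set (β i)} (hS : ∀ i, MeasurableSet (S i))
    {B : κ → Finset ι} (hB : Pairwise (Disjoint on B)) :
    iIndepSet (fun k => ⋂ i ∈ B k, f i ⁻¹' S i) μ := by
  classical
  have hprod (T : Finset ι) :
      μ (⋂ i ∈ T, f i ⁻¹' S i) = ∏ i ∈ T, μ (f i ⁻¹' S i) :=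
    hf.measure_inter_preimage_eq_mul T fun i _ => hS i
  refine (iIndepSet_iff_meas_biInter fun k =>
    .biInter (B k).countable_toSet fun i _ => hfm i (hS i)).2 fun s => ?_
  calc μ (⋂ k ∈ s, ⋂ i ∈ B k, f i ⁻¹' S i)
      = μ (⋂ i ∈ s.biUnion B, f i ⁻¹' S i) := by simp only [Finset.set_biInter_biUnion]
    _ = ∏ k ∈ s, ∏ i ∈ B k, μ (f i ⁻¹' S i) := by
      rw [hprod, Finset.prod_biUnion (hB.set_pairwise _)]
    _ = ∏ k ∈ s, μ (⋂ i ∈ B k, f i ⁻¹' S i) := by simp only [hprod]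

lemma measure_limsup_eq_one_of_measure_eq {A : ℕ → Set Ω} (hAm : ∀ n, MeasurableSet (A n))
    (hA : iIndepSet A μ) {c : ℝ≥0∞} (hc : c ≠ 0) (hμA : ∀ n, μ (A n) = c) :
    μ (limsup A atTop) = 1 :=
  measure_limsup_eq_one hAm hA <| by
    simpa only [hμA] using ENNReal.tsum_const_eq_top_of_ne_zero hc

end ProbabilityTheory

/-- For a sequence `(σ_n)_{n ≥ 1}` of independent random variables where the
odd-indexed ones are exponential with rate `α` and the even-indexed ones are exponential with
rate `β`, almost surely there are infinitely many `n` with `σ_n ∈ (s1, s2)` and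
`σ_{n+1} ∈ (s3, s4)`. -/
theorem sojourn_times_infinitely_often
    {Ω : Type*} [MeasurableSpace Ω] (μ : Measure Ω) [IsProbabilityMeasure μ]
    (σ : ℕ → Ω → ℝ) (hmeas : ∀ n, Measurable (σ n))
    (α β : ℝ) (hα : 0 < α) (hβ : 0 < β)
    (hindep : iIndepFun (fun n : ℕ => σ (n + 1)) μ)
    (hodd : ∀ n : ℕ, μ.map (σ (2 * n + 1)) = expMeasure α)
    (heven : ∀ n : ℕ, 1 ≤ n → μ.map (σ (2 * n)) = expMeasure β)
    (s1 s2 s3 s4 : ℝ) (hs1 : 0 < s1) (hs12 : s1 < s2) (hs3 : 0 < s3) (hs34 : s3 < s4) :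
    μ {ω | ∃ᶠ n in atTop, (1 ≤ n ∧
      σ n ω ∈ Set.Ioo s1 s2 ∧ σ (n + 1) ω ∈ Set.Ioo s3 s4)} = 1 := by
  set S : ℕ → Set ℝ := fun i => if Even i then Ioo s1 s2 else Ioo s3 s4
  set A : ℕ → Set Ω := fun k => ⋂ i ∈ ({2 * k, 2 * k + 1} : Finset ℕ), σ (i + 1) ⁻¹' S i
  have hA (k : ℕ) :
      A k = σ (2 * k + 1) ⁻¹' Ioo s1 s2 ∩ σ (2 * k + 1 + 1) ⁻¹' Ioo s3 s4 := by
    simp [A, S]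
  have hAm (k : ℕ) : MeasurableSet (A k) :=
    hA k ▸ (hmeas _ measurableSet_Ioo).inter (hmeas _ measurableSet_Ioo)
  have hA_indep : iIndepSet A μ := by
    refine hindep.iIndepSet_biInter_preimage (fun i => hmeas _) (S := S)
      (fun i => by by_cases h : Even i <;> simp [S, h]) fun k l hkl => ?_
    simp only [onFun, Finset.disjoint_insert_left, Finset.disjoint_insert_right,
      Finset.disjoint_singleton, Finset.mem_insert, Finset.mem_singleton]
    omega
  have hμA (k : ℕ) : μ (A k) = expMeasure α (Ioo s1 s2) * expMeasure β (Ioo s3 s4) := by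
    rw [hA, (hindep.indepFun (by omega : 2 * k ≠ 2 * k + 1)).measure_inter_preimage_eq_mul _ _
      measurableSet_Ioo measurableSet_Ioo, ← Measure.map_apply (hmeas _) measurableSet_Ioo,
      ← Measure.map_apply (hmeas _) measurableSet_Ioo, hodd,
      show 2 * k + 1 + 1 = 2 * (k + 1) by ring, heven _ k.succ_pos]
  have hlimsup := measure_limsup_eq_one_of_measure_eq hAm hA_indep
    (mul_ne_zero (expMeasure_Ioo_pos hα (hs1.trans hs12) hs12).ne'
      (expMeasure_Ioo_pos hβ (hs3.trans hs34) hs34).ne') hμA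
  refine le_antisymm prob_le_one (hlimsup ▸ measure_mono fun ω hω => ?_)
  rw [mem_limsup_iff_frequently_mem, frequently_atTop] at hω
  rw [mem_ofPred_eq, frequently_atTop]
  intro N
  obtain ⟨k, hk, hAk⟩ := hω N
  rw [hA] at hAk
  exact ⟨2 * k + 1, by omega, by omega, hAk.1, hAk.2⟩
end

section
/- Let a, b, c, d, e, f be positive real constants with a·e > b·d, and set u* = (a·f + c·d)/(b·f + c·e), v* = (a·e − b·d)/(b·f + c·e). Let U, V : [0,∞) → ℝ be differentiable with U(0) > 0, V(0) > 0, and U′(t) = U(t)(a − b·U(t) − c·V(t)), V′(t) = V(t)(−d + e·U(t) − f·V(t)) for all t ≥ 0. Then U(t) → u* and V(t) → v* as t → ∞. -/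
/-!
Positivity and boundedness of the solution follow by comparison with barriers. Along the
solution, `W = e (U - u* log U) + c (V - v* log V)` satisfies
`W' = -(e b (U - u*)² + c f (V - v*)²)` and is bounded below, so it converges. The trajectory
stays in a compact box, hence this dissipation is uniformly continuous in time, and Barbalat's
lemma forces it to tend to `0`.
-/

open Filter Set Topology

section HalfLine

variable {E : Type*} [NormedAddCommGroup E] [NormedSpace ℝ E] {F F' : ℝ → E}

theorem continuousOn_Ici_of_hasDerivWithinAt
    (hF : ∀ t, 0 ≤ t → HasDerivWithinAt F (F' t) (Ici 0) t) : ContinuousOn F (Ici 0) :=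
  fun t ht => (hF t ht).continuousWithinAt

theorem hasDerivWithinAt_Ici_of_forall_Ici_zero
    (hF : ∀ t, 0 ≤ t → HasDerivWithinAt F (F' t) (Ici 0) t) {t : ℝ} (ht : 0 ≤ t) :
    HasDerivWithinAt F (F' t) (Ici t) t :=
  (hF t ht).mono (Ici_subset_Ici.2 ht)

theorem uniformContinuousOn_Ici_of_hasDerivWithinAt_of_norm_le
    (hF : ∀ t, 0 ≤ t → HasDerivWithinAt F (F' t) (Ici 0) t) {C : ℝ}
    (hC : ∀ t, 0 ≤ t → ‖F' t‖ ≤ C) : UniformContinuousOn F (Ici 0) :=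
  ((convex_Ici 0).lipschitzOnWith_of_nnnorm_hasDerivWithin_le (C := C.toNNReal) hF
    fun t ht => NNReal.coe_le_coe.1 ((hC t ht).trans (Real.le_coe_toNNReal C))).uniformContinuousOn

theorem uniformContinuousOn_Ici_of_hasDerivWithinAt_of_mapsTo {Φ : E → E} {K : Set E}
    (hK : IsCompact K) (hΦ : ContinuousOn Φ K)
    (hF : ∀ t, 0 ≤ t → HasDerivWithinAt F (Φ (F t)) (Ici 0) t) (hFK : MapsTo F (Ici 0) K) :
    UniformContinuousOn F (Ici 0) := by
  obtain ⟨C, hC⟩ := hK.exists_bound_of_continuousOn hΦ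
  exact uniformContinuousOn_Ici_of_hasDerivWithinAt_of_norm_le hF fun t ht => hC _ (hFK ht)

end HalfLine

theorem le_of_hasDerivWithinAt_of_deriv_neg_of_eq {X X' : ℝ → ℝ} {M : ℝ}
    (hX : ∀ t, 0 ≤ t → HasDerivWithinAt X (X' t) (Ici 0) t) (h0 : X 0 ≤ M)
    (hM : ∀ t, 0 ≤ t → X t = M → X' t < 0) {T : ℝ} (hT : 0 ≤ T) : X T ≤ M :=
  image_le_of_deriv_right_lt_deriv_boundary (B := fun _ => M) (B' := 0)
    ((continuousOn_Ici_of_hasDerivWithinAt hX).mono fun _ ht => ht.1)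
    (fun _ ht => hasDerivWithinAt_Ici_of_forall_Ici_zero hX ht.1) h0
    (fun _ => hasDerivAt_const _ _) (fun _ ht => hM _ ht.1) ⟨hT, le_rfl⟩

theorem pos_of_hasDerivWithinAt_mul {X g : ℝ → ℝ} (hg : ContinuousOn g (Ici 0))
    (hX : ∀ t, 0 ≤ t → HasDerivWithinAt X (X t * g t) (Ici 0) t) (h0 : 0 < X 0)
    {T : ℝ} (hT : 0 ≤ T) : 0 < X T := by
  obtain ⟨K, hK⟩ :=
    (isCompact_Icc (a := 0) (b := T)).exists_bound_of_continuousOn (hg.mono fun _ ht => ht.1)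
  -- barrier: `B` decays strictly faster than `X` can while `|g| ≤ K`
  set B : ℝ → ℝ := fun t => X 0 * Real.exp (-(K + 1) * t)
  have hB : ∀ t, HasDerivAt B (-(K + 1) * B t) t := fun t => by
    simpa [B, mul_comm, mul_left_comm, mul_assoc] using
      ((hasDerivAt_id t).const_mul (-(K + 1))).exp.const_mul (X 0)
  have hBX : B T ≤ X T :=
    image_le_of_deriv_right_lt_deriv_boundary' (fun t _ => (hB t).continuousAt.continuousWithinAt)
      (fun t _ => (hB t).hasDerivWithinAt) (by simp [B])
      ((continuousOn_Ici_of_hasDerivWithinAt hX).mono fun _ ht => ht.1)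
      (fun t ht => hasDerivWithinAt_Ici_of_forall_Ici_zero hX ht.1)
      (fun t ht hBt => by
        have hgt : -K ≤ g t := neg_le_of_abs_le (hK t (Ico_subset_Icc_self ht))
        have hBpos : 0 < B t := by positivity
        rw [← hBt]; nlinarith)
      ⟨hT, le_rfl⟩
  exact (by positivity : 0 < B T).trans_le hBX

theorem exists_tendsto_of_hasDerivWithinAt_nonpos {W W' : ℝ → ℝ} {B : ℝ}
    (hW : ∀ t, 0 ≤ t → HasDerivWithinAt W (W' t) (Ici 0) t) (hW' : ∀ t, 0 ≤ t → W' t ≤ 0)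
    (hB : ∀ t, 0 ≤ t → B ≤ W t) : ∃ L, Tendsto W atTop (𝓝 L) := by
  have hanti : AntitoneOn W (Ici 0) :=
    antitoneOn_of_hasDerivWithinAt_nonpos (convex_Ici 0) (continuousOn_Ici_of_hasDerivWithinAt hW)
      (fun t ht => by
        rw [interior_Ici] at ht ⊢
        exact (hW t (le_of_lt ht)).mono Ioi_subset_Ici_self)
      (fun t ht => hW' t (interior_subset ht))
  have hanti' : Antitone fun t => W (max t 0) := fun s t hst =>
    hanti (le_max_right s 0) (le_max_right t 0) (max_le_max_right 0 hst)
  have hbdd : BddBelow (range fun t => W (max t 0)) :=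
    ⟨B, by rintro _ ⟨t, rfl⟩; exact hB _ (le_max_right t 0)⟩
  exact ⟨_, (tendsto_atTop_ciInf hanti' hbdd).congr' <|
    (eventually_ge_atTop 0).mono fun t ht => by rw [max_eq_left ht]⟩

theorem eventually_lt_of_tendsto_of_uniformContinuousOn {G g : ℝ → ℝ} {L ε : ℝ}
    (hG : ∀ t, 0 ≤ t → HasDerivWithinAt G (g t) (Ici 0) t) (hg : UniformContinuousOn g (Ici 0))
    (hGL : Tendsto G atTop (𝓝 L)) (hε : 0 < ε) : ∀ᶠ t in atTop, g t < ε := by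
  obtain ⟨δ, hδ, hgδ⟩ := Metric.uniformContinuousOn_iff.1 hg (ε / 2) (half_pos hε)
  have hincr : Tendsto (fun t => G (t + δ / 2) - G t) atTop (𝓝 0) := by
    simpa using (hGL.comp (tendsto_atTop_add_const_right _ _ tendsto_id)).sub hGL
  filter_upwards [hincr.eventually (gt_mem_nhds (by positivity : 0 < ε / 2 * (δ / 2))),
    eventually_ge_atTop 0] with t hincr_t ht
  by_contra! hgt
  -- `g ≥ ε / 2` on `[t, t + δ / 2]`, so `G` gains at least `ε / 2 * (δ / 2)` there
  have hGgain : G t + ε / 2 * (t + δ / 2 - t) ≤ G (t + δ / 2) :=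
    image_le_of_deriv_right_le_deriv_boundary (f := fun s => G t + ε / 2 * (s - t))
      (by fun_prop) (fun s _ => ((hasDerivAt_id s).sub_const t |>.const_mul (ε / 2)
        |>.const_add (G t)).hasDerivWithinAt.congr_deriv (mul_one _))
      (by simp) ((continuousOn_Ici_of_hasDerivWithinAt hG).mono fun s hs => ht.trans hs.1)
      (fun s hs => hasDerivWithinAt_Ici_of_forall_Ici_zero hG (ht.trans hs.1))
      (fun s hs => by
        have hdist : dist s t < δ := by
          rw [Real.dist_eq, abs_of_nonneg (by linarith [hs.1])]; linarith [hs.2]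
        have := hgδ s (ht.trans hs.1) t ht hdist
        rw [Real.dist_eq] at this
        linarith [(abs_lt.1 this).1])
      ⟨by linarith, le_rfl⟩
  linarith

/-- Barbalat's lemma. -/
theorem tendsto_zero_of_tendsto_of_uniformContinuousOn {G g : ℝ → ℝ} {L : ℝ}
    (hG : ∀ t, 0 ≤ t → HasDerivWithinAt G (g t) (Ici 0) t) (hg : UniformContinuousOn g (Ici 0))
    (hGL : Tendsto G atTop (𝓝 L)) : Tendsto g atTop (𝓝 0) := by
  refine tendsto_order.2 ⟨fun ε hε => ?_, fun ε hε =>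
    eventually_lt_of_tendsto_of_uniformContinuousOn hG hg hGL hε⟩
  have hneg := eventually_lt_of_tendsto_of_uniformContinuousOn (G := -G) (g := -g)
    (fun t ht => (hG t ht).neg) (uniformContinuous_neg.comp_uniformContinuousOn hg) hGL.neg
    (neg_pos.2 hε)
  exact hneg.mono fun t ht => by simpa using ht

theorem sub_mul_log_le_sub_mul_log {x k : ℝ} (hx : 0 < x) (hk : 0 < k) :
    k - k * Real.log k ≤ x - k * Real.log x := by
  have h := Real.log_le_sub_one_of_pos (div_pos hx hk)
  rw [Real.log_div hx.ne' hk.ne', le_sub_iff_add_le, le_div_iff₀ hk] at h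
  nlinarith

theorem HasDerivWithinAt.sub_mul_log {X : ℝ → ℝ} {s : Set ℝ} {t r : ℝ} (k : ℝ)
    (hX : HasDerivWithinAt X (X t * r) s t) (ht : 0 < X t) :
    HasDerivWithinAt (fun u => X u - k * Real.log (X u)) ((X t - k) * r) s t := by
  refine (hX.sub ((hX.log ht.ne').const_mul k)).congr_deriv ?_
  field_simp

theorem tendsto_of_tendsto_add_sq {α : Type*} {l : Filter α} {x y : α → ℝ} {p r μ ν : ℝ}
    (hμ : 0 < μ) (hν : 0 < ν)
    (h : Tendsto (fun i => μ * (x i - p) ^ 2 + ν * (y i - r) ^ 2) l (𝓝 0)) :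
    Tendsto x l (𝓝 p) ∧ Tendsto y l (𝓝 r) := by
  have key : ∀ {z : α → ℝ} {q κ : ℝ}, 0 < κ →
      (∀ i, κ * (z i - q) ^ 2 ≤ μ * (x i - p) ^ 2 + ν * (y i - r) ^ 2) → Tendsto z l (𝓝 q) := by
    intro z q κ hκ hz
    have hsq : Tendsto (fun i => (z i - q) ^ 2) l (𝓝 0) := by
      refine squeeze_zero (fun i => sq_nonneg _) (fun i => (le_div_iff₀' hκ).2 (hz i)) ?_
      simpa using h.div_const κ
    rw [tendsto_iff_dist_tendsto_zero]
    simpa [Real.dist_eq, Real.sqrt_sq_eq_abs] using hsq.sqrt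
  exact ⟨key hμ fun i => by nlinarith [sq_nonneg (y i - r)],
    key hν fun i => by nlinarith [sq_nonneg (x i - p)]⟩

namespace LotkaVolterra

variable {a b c d e f : ℝ} {U V : ℝ → ℝ}

theorem solution_pos
    (hdU : ∀ t, 0 ≤ t → HasDerivWithinAt U (U t * (a - b * U t - c * V t)) (Ici 0) t)
    (hdV : ∀ t, 0 ≤ t → HasDerivWithinAt V (V t * (-d + e * U t - f * V t)) (Ici 0) t)
    (hU0 : 0 < U 0) (hV0 : 0 < V 0) {t : ℝ} (ht : 0 ≤ t) : 0 < U t ∧ 0 < V t := by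
  have hU := continuousOn_Ici_of_hasDerivWithinAt hdU
  have hV := continuousOn_Ici_of_hasDerivWithinAt hdV
  exact ⟨pos_of_hasDerivWithinAt_mul (by fun_prop) hdU hU0 ht,
    pos_of_hasDerivWithinAt_mul (by fun_prop) hdV hV0 ht⟩

theorem exists_isCompact_mapsTo (hb : 0 < b) (hc : 0 < c) (hd : 0 < d) (he : 0 < e) (hf : 0 < f)
    (hdU : ∀ t, 0 ≤ t → HasDerivWithinAt U (U t * (a - b * U t - c * V t)) (Ici 0) t)
    (hdV : ∀ t, 0 ≤ t → HasDerivWithinAt V (V t * (-d + e * U t - f * V t)) (Ici 0) t)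
    (hU0 : 0 < U 0) (hV0 : 0 < V 0) :
    ∃ K : Set (ℝ × ℝ), IsCompact K ∧ MapsTo (fun t => (U t, V t)) (Ici 0) K := by
  have hpos := fun t (ht : 0 ≤ t) => solution_pos hdU hdV hU0 hV0 ht
  set MU := max (U 0) (a / b)
  have hbMU : a ≤ b * MU := (div_le_iff₀' hb).1 (le_max_right _ _)
  have hU : ∀ t, 0 ≤ t → U t ≤ MU := fun t =>
    le_of_hasDerivWithinAt_of_deriv_neg_of_eq hdU (le_max_left _ _) fun s hs hsM => by
      obtain ⟨hUs, hVs⟩ := hpos s hs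
      exact mul_neg_of_pos_of_neg hUs (by rw [hsM]; nlinarith)
  set MV := max (V 0) (e * MU / f)
  have hfMV : e * MU ≤ f * MV := (div_le_iff₀' hf).1 (le_max_right _ _)
  have hV : ∀ t, 0 ≤ t → V t ≤ MV := fun t =>
    le_of_hasDerivWithinAt_of_deriv_neg_of_eq hdV (le_max_left _ _) fun s hs hsM => by
      have hUs : e * U s ≤ e * MU := mul_le_mul_of_nonneg_left (hU s hs) he.le
      exact mul_neg_of_pos_of_neg (hpos s hs).2 (by rw [hsM]; linarith)
  exact ⟨Icc 0 MU ×ˢ Icc 0 MV, isCompact_Icc.prod isCompact_Icc,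
    fun t ht => ⟨⟨(hpos t ht).1.le, hU t ht⟩, (hpos t ht).2.le, hV t ht⟩⟩

theorem hasDerivWithinAt_lyapunov {s : Set ℝ} {t us vs : ℝ}
    (ha : a = b * us + c * vs) (hd : d = e * us - f * vs)
    (hdU : HasDerivWithinAt U (U t * (a - b * U t - c * V t)) s t)
    (hdV : HasDerivWithinAt V (V t * (-d + e * U t - f * V t)) s t)
    (hU : 0 < U t) (hV : 0 < V t) :
    HasDerivWithinAt (fun u => e * (U u - us * Real.log (U u)) + c * (V u - vs * Real.log (V u)))
      (-(e * b * (U t - us) ^ 2 + c * f * (V t - vs) ^ 2)) s t := by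
  refine (((hdU.sub_mul_log us hU).const_mul e).add
    ((hdV.sub_mul_log vs hV).const_mul c)).congr_deriv ?_
  rw [ha, hd]
  ring

theorem tendsto_dissipation (hb : 0 < b) (hc : 0 < c) (hd : 0 < d) (he : 0 < e) (hf : 0 < f)
    {us vs : ℝ} (hus : 0 < us) (hvs : 0 < vs) (ha_eq : a = b * us + c * vs)
    (hd_eq : d = e * us - f * vs)
    (hdU : ∀ t, 0 ≤ t → HasDerivWithinAt U (U t * (a - b * U t - c * V t)) (Ici 0) t)
    (hdV : ∀ t, 0 ≤ t → HasDerivWithinAt V (V t * (-d + e * U t - f * V t)) (Ici 0) t)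
    (hU0 : 0 < U 0) (hV0 : 0 < V 0) :
    Tendsto (fun t => e * b * (U t - us) ^ 2 + c * f * (V t - vs) ^ 2) atTop (𝓝 0) := by
  have hpos := fun t (ht : 0 ≤ t) => solution_pos hdU hdV hU0 hV0 ht
  obtain ⟨K, hK, hUVK⟩ := exists_isCompact_mapsTo hb hc hd he hf hdU hdV hU0 hV0
  have hUV : UniformContinuousOn (fun t => (U t, V t)) (Ici 0) :=
    uniformContinuousOn_Ici_of_hasDerivWithinAt_of_mapsTo
      (Φ := fun p => (p.1 * (a - b * p.1 - c * p.2), p.2 * (-d + e * p.1 - f * p.2))) hK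
      (by fun_prop) (fun t ht => (hdU t ht).prodMk (hdV t ht)) hUVK
  have hq : UniformContinuousOn (fun t => -(e * b * (U t - us) ^ 2 + c * f * (V t - vs) ^ 2))
      (Ici 0) :=
    (hK.uniformContinuousOn_of_continuous (f := fun p : ℝ × ℝ =>
      -(e * b * (p.1 - us) ^ 2 + c * f * (p.2 - vs) ^ 2)) (by fun_prop)).comp hUV hUVK
  have hW := fun t ht => hasDerivWithinAt_lyapunov ha_eq hd_eq (hdU t ht) (hdV t ht)
    (hpos t ht).1 (hpos t ht).2
  obtain ⟨L, hL⟩ := exists_tendsto_of_hasDerivWithinAt_nonpos hW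
    (fun t _ => by simp only [neg_nonpos]; positivity) fun t ht =>
      add_le_add (mul_le_mul_of_nonneg_left (sub_mul_log_le_sub_mul_log (hpos t ht).1 hus) he.le)
        (mul_le_mul_of_nonneg_left (sub_mul_log_le_sub_mul_log (hpos t ht).2 hvs) hc.le)
  simpa using (tendsto_zero_of_tendsto_of_uniformContinuousOn hW hq hL).neg

end LotkaVolterra

/-- Global convergence to the positive coexistence equilibrium for the
autonomous Lotka–Volterra predator-prey system when `a e > b d`. -/
theorem lotka_volterra_coexistence_convergence
    (a b c d e f : ℝ)
    (ha : 0 < a) (hb : 0 < b) (hc : 0 < c) (hd : 0 < d) (he : 0 < e) (hf : 0 < f)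
    (hcond : b * d < a * e)
    (U V : ℝ → ℝ) (hU0 : 0 < U 0) (hV0 : 0 < V 0)
    (hdU : ∀ t, 0 ≤ t →
      HasDerivWithinAt U (U t * (a - b * U t - c * V t)) (Set.Ici 0) t)
    (hdV : ∀ t, 0 ≤ t →
      HasDerivWithinAt V (V t * (-d + e * U t - f * V t)) (Set.Ici 0) t) :
    Tendsto U atTop (nhds ((a * f + c * d) / (b * f + c * e))) ∧
    Tendsto V atTop (nhds ((a * e - b * d) / (b * f + c * e))) := by
  set us := (a * f + c * d) / (b * f + c * e)
  set vs := (a * e - b * d) / (b * f + c * e)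
  have hden : 0 < b * f + c * e := by positivity
  have hus : 0 < us := div_pos (by positivity) hden
  have hvs : 0 < vs := div_pos (by linarith) hden
  have ha_eq : a = b * us + c * vs := by simp only [us, vs]; field_simp; ring
  have hd_eq : d = e * us - f * vs := by simp only [us, vs]; field_simp; ring
  exact tendsto_of_tendsto_add_sq (mul_pos he hb) (mul_pos hc hf) <|
    LotkaVolterra.tendsto_dissipation hb hc hd he hf hus hvs ha_eq hd_eq hdU hdV hU0 hV0
end

section
/- Let a, b, c, d, e, f be positive real constants with a·e < b·d. Let U, V : [0,∞) → ℝ be differentiable with U(0) > 0, V(0) > 0, and U′(t) = U(t)(a − b·U(t) − c·V(t)), V′(t) = V(t)(−d + e·U(t) − f·V(t)) for all t ≥ 0. Then V(t) → 0 and U(t) → a/b as t → ∞. -/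
/-!
Both populations stay positive, since a solution of `X' = X r` that vanished somewhere would
coincide with the zero solution. One then works with `log U` and `log V`, whose derivatives are the
per-capita growth rates. For `θ > a / b` the rate `a - b U - c V` is at most `a - b θ < 0` whenever
`U ≥ θ`, so `U` eventually stays below `θ`. Taking `a / b < θ < d / e`, the predator rate
`-d + e U - f V` is eventually at most `e θ - d < 0`, so `log V → -∞` and `V → 0`. Once `c V` is
small, the same barrier argument applied from below keeps `U` eventually above any `θ < a / b`.
-/

open Filter Set Real Topology

section RightDerivative

variable {X X' : ℝ → ℝ} {t₀ : ℝ}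

theorem pos_of_hasDerivWithinAt_mul_s14 {r : ℝ → ℝ} (hr : ContinuousOn r (Ici t₀))
    (hX : ∀ t ∈ Ici t₀, HasDerivWithinAt X (X t * r t) (Ici t₀) t) (h₀ : 0 < X t₀) :
    ∀ t ∈ Ici t₀, 0 < X t := by
  have hXc : ContinuousOn X (Ici t₀) := fun t ht => (hX t ht).continuousWithinAt
  have hne : ∀ s ∈ Ici t₀, X s ≠ 0 := by
    intro s hs hXs
    obtain ⟨C, hC⟩ := isCompact_Icc.exists_bound_of_continuousOn (hr.mono Icc_subset_Ici_self)
    have hLip : ∀ t ∈ Ioc t₀ s, LipschitzOnWith C.toNNReal (fun x => x * r t) univ := by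
      refine fun t ht => LipschitzOnWith.of_dist_le_mul fun x _ y _ => ?_
      rw [dist_eq_norm, dist_eq_norm, ← sub_mul, norm_mul, mul_comm]
      exact mul_le_mul_of_nonneg_right ((hC t (Ioc_subset_Icc_self ht)).trans (le_coe_toNNReal C))
        (norm_nonneg _)
    have hzero := ODE_solution_unique_of_mem_Icc_left (g := fun _ => 0) hLip
      (hXc.mono Icc_subset_Ici_self)
      (fun t ht => ((hX t ht.1.le).hasDerivAt (Ici_mem_nhds ht.1)).hasDerivWithinAt)
      (fun _ _ => mem_univ _) continuousOn_const
      (fun t _ => by simpa using hasDerivWithinAt_const t (Iic t) (0 : ℝ))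
      (fun _ _ => mem_univ _) hXs ⟨le_rfl, hs⟩
    exact h₀.ne' hzero
  intro t ht
  by_contra! hXt
  obtain ⟨s, hs, hXs⟩ := intermediate_value_Icc' ht (hXc.mono Icc_subset_Ici_self) ⟨hXt, h₀.le⟩
  exact hne s hs.1 hXs

theorem HasDerivWithinAt.log_of_mul {s : Set ℝ} {t ρ : ℝ}
    (hX : HasDerivWithinAt X (X t * ρ) s t) (ht : X t ≠ 0) :
    HasDerivWithinAt (fun t => Real.log (X t)) ρ s t := by
  simpa [ht] using hX.log ht

theorem tendsto_atBot_of_hasDerivWithinAt_le_neg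
    (hX : ∀ t ∈ Ici t₀, HasDerivWithinAt X (X' t) (Ici t₀) t) {γ : ℝ} (hγ : 0 < γ)
    (hX' : ∀ᶠ t in atTop, X' t ≤ -γ) : Tendsto X atTop atBot := by
  obtain ⟨t₁, ht₁⟩ := eventually_atTop.1 (hX'.and (eventually_ge_atTop t₀))
  have ht₀₁ : t₀ ≤ t₁ := (ht₁ t₁ le_rfl).2
  have hlin : ∀ t ≥ t₁, X t ≤ X t₁ + γ * t₁ + -γ * t := fun t ht =>
    image_le_of_deriv_right_le_deriv_boundary (B := fun t => X t₁ + γ * t₁ + -γ * t)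
      (fun x hx => (hX x (ht₀₁.trans hx.1)).continuousWithinAt.mono
        (Icc_subset_Ici_self.trans (Ici_subset_Ici.2 ht₀₁)))
      (fun x hx => (hX x (ht₀₁.trans hx.1)).mono (Ici_subset_Ici.2 (ht₀₁.trans hx.1)))
      (le_of_eq (by ring)) (by fun_prop)
      (fun x _ => (((hasDerivAt_id x).const_mul (-γ)).const_add _).hasDerivWithinAt.congr_deriv
        (mul_one _))
      (fun x hx => (ht₁ x hx.1).1) ⟨ht, le_rfl⟩
  exact tendsto_atBot_mono' _ (eventually_atTop.2 ⟨t₁, hlin⟩)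
    (tendsto_atBot_add_const_left _ _ (tendsto_id.const_mul_atTop_of_neg (neg_lt_zero.2 hγ)))

theorem eventually_le_of_hasDerivWithinAt_le_neg_above
    (hX : ∀ t ∈ Ici t₀, HasDerivWithinAt X (X' t) (Ici t₀) t) {γ M : ℝ} (hγ : 0 < γ)
    (hX' : ∀ᶠ t in atTop, M ≤ X t → X' t ≤ -γ) : ∀ᶠ t in atTop, X t ≤ M := by
  obtain ⟨t₁, ht₁⟩ := eventually_atTop.1 (hX'.and (eventually_ge_atTop t₀))
  have ht₀₁ : t₀ ≤ t₁ := (ht₁ t₁ le_rfl).2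
  obtain ⟨t₂, ht₁₂, hX₂⟩ : ∃ t₂ ≥ t₁, X t₂ ≤ M := by
    by_contra! hgt
    have hbot := tendsto_atBot_of_hasDerivWithinAt_le_neg hX hγ
      (eventually_atTop.2 ⟨t₁, fun t ht => (ht₁ t ht).1 (hgt t ht).le⟩)
    obtain ⟨t, hXt, ht⟩ := ((hbot.eventually_lt_atBot M).and (eventually_ge_atTop t₁)).exists
    exact (hgt t ht).not_gt hXt
  refine eventually_atTop.2 ⟨t₂, fun t ht => ?_⟩
  have ht₀₂ : t₀ ≤ t₂ := ht₀₁.trans ht₁₂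
  exact image_le_of_deriv_right_lt_deriv_boundary (B := fun _ => M) (B' := 0)
    (fun x hx => (hX x (ht₀₂.trans hx.1)).continuousWithinAt.mono
      (Icc_subset_Ici_self.trans (Ici_subset_Ici.2 ht₀₂)))
    (fun x hx => (hX x (ht₀₂.trans hx.1)).mono (Ici_subset_Ici.2 (ht₀₂.trans hx.1)))
    hX₂ (fun x => hasDerivAt_const x M)
    (fun x hx hXx => ((ht₁ x (ht₁₂.trans hx.1)).1 hXx.ge).trans_lt (neg_neg_of_pos hγ))
    ⟨ht, le_rfl⟩

end RightDerivative

namespace LotkaVolterra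

variable {a b c d e f : ℝ} {U V : ℝ → ℝ}

theorem prey_eventually_lt (ha : 0 < a) (hb : 0 < b) (hc : 0 ≤ c)
    (hU : ∀ t ∈ Ici (0 : ℝ), 0 < U t) (hV : ∀ t ∈ Ici (0 : ℝ), 0 ≤ V t)
    (hlogU : ∀ t ∈ Ici (0 : ℝ),
      HasDerivWithinAt (fun t => log (U t)) (a - b * U t - c * V t) (Ici 0) t)
    {θ : ℝ} (hθ : a / b < θ) : ∀ᶠ t in atTop, U t < θ := by
  obtain ⟨θ', hθ', hθ'θ⟩ := exists_between hθ
  have hθ'₀ : 0 < θ' := (div_pos ha hb).trans hθ'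
  have hgrowth : a < b * θ' := by rwa [div_lt_iff₀' hb] at hθ'
  have hlog := eventually_le_of_hasDerivWithinAt_le_neg_above hlogU (sub_pos.2 hgrowth)
    (M := log θ') <| (eventually_ge_atTop 0).mono fun t ht hUt => by
      have := (log_le_log_iff hθ'₀ (hU t ht)).1 hUt
      nlinarith [mul_nonneg hc (hV t ht)]
  filter_upwards [hlog, eventually_ge_atTop 0] with t hUt ht
  exact ((log_le_log_iff (hU t ht) hθ'₀).1 hUt).trans_lt hθ'θ

theorem prey_eventually_gt (ha : 0 < a) (hb : 0 < b)
    (hU : ∀ t ∈ Ici (0 : ℝ), 0 < U t) (hVlim : Tendsto V atTop (𝓝 0))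
    (hlogU : ∀ t ∈ Ici (0 : ℝ),
      HasDerivWithinAt (fun t => log (U t)) (a - b * U t - c * V t) (Ici 0) t)
    {θ : ℝ} (hθ : θ < a / b) : ∀ᶠ t in atTop, θ < U t := by
  obtain ⟨θ', hθθ', hθ'⟩ := exists_between (max_lt hθ (div_pos ha hb))
  have hθ'₀ : 0 < θ' := (le_max_right θ 0).trans_lt hθθ'
  have hgrowth : b * θ' < a := by rwa [lt_div_iff₀' hb] at hθ'
  obtain ⟨κ, hθ'κ, hκa⟩ := exists_between hgrowth
  have hcV : ∀ᶠ t in atTop, c * V t < κ - b * θ' := by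
    simpa using (hVlim.const_mul c).eventually (gt_mem_nhds (by simpa using sub_pos.2 hθ'κ))
  have hlog := eventually_le_of_hasDerivWithinAt_le_neg_above (fun t ht => (hlogU t ht).neg)
    (sub_pos.2 hκa) (M := -log θ') <| (hcV.and (eventually_ge_atTop 0)).mono
      fun t ⟨hVt, ht⟩ hUt => by
        have := (log_le_log_iff (hU t ht) hθ'₀).1 (neg_le_neg_iff.1 hUt)
        nlinarith
  filter_upwards [hlog, eventually_ge_atTop 0] with t hUt ht
  calc θ ≤ max θ 0 := le_max_left θ 0
    _ < θ' := hθθ'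
    _ ≤ U t := (log_le_log_iff hθ'₀ (hU t ht)).1 (neg_le_neg_iff.1 hUt)

theorem predator_tendsto_zero (he : 0 ≤ e) (hf : 0 ≤ f)
    (hV : ∀ t ∈ Ici (0 : ℝ), 0 < V t)
    (hlogV : ∀ t ∈ Ici (0 : ℝ),
      HasDerivWithinAt (fun t => log (V t)) (-d + e * U t - f * V t) (Ici 0) t)
    {θ : ℝ} (hθ : e * θ < d) (hUθ : ∀ᶠ t in atTop, U t < θ) : Tendsto V atTop (𝓝 0) := by
  have hbot := tendsto_atBot_of_hasDerivWithinAt_le_neg hlogV (sub_pos.2 hθ) <|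
    (hUθ.and (eventually_ge_atTop 0)).mono fun t ⟨hUt, ht⟩ => by
      nlinarith [mul_nonneg hf (hV t ht).le, mul_le_mul_of_nonneg_left hUt.le he]
  refine (tendsto_exp_atBot.comp hbot).congr' ?_
  filter_upwards [eventually_ge_atTop 0] with t ht
  exact exp_log (hV t ht)

end LotkaVolterra

theorem lotka_volterra_predator_extinction_general
    (a b c d e f : ℝ)
    (ha : 0 < a) (hb : 0 < b) (hc : 0 < c) (he : 0 < e) (hf : 0 < f)
    (hcond : a * e < b * d)
    (U V : ℝ → ℝ) (hU0 : 0 < U 0) (hV0 : 0 < V 0)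
    (hdU : ∀ t, 0 ≤ t →
      HasDerivWithinAt U (U t * (a - b * U t - c * V t)) (Set.Ici 0) t)
    (hdV : ∀ t, 0 ≤ t →
      HasDerivWithinAt V (V t * (-d + e * U t - f * V t)) (Set.Ici 0) t) :
    Tendsto V atTop (nhds 0) ∧ Tendsto U atTop (nhds (a / b)) := by
  have hUc : ContinuousOn U (Ici 0) := fun t ht => (hdU t ht).continuousWithinAt
  have hVc : ContinuousOn V (Ici 0) := fun t ht => (hdV t ht).continuousWithinAt
  have hU := pos_of_hasDerivWithinAt_mul_s14 (by fun_prop) hdU hU0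
  have hV := pos_of_hasDerivWithinAt_mul_s14 (by fun_prop) hdV hV0
  have hlogU := fun t ht => (hdU t ht).log_of_mul (hU t ht).ne'
  have hlogV := fun t ht => (hdV t ht).log_of_mul (hV t ht).ne'
  have hUlt : ∀ θ > a / b, ∀ᶠ t in atTop, U t < θ := fun θ =>
    LotkaVolterra.prey_eventually_lt ha hb hc.le hU (fun t ht => (hV t ht).le) hlogU
  obtain ⟨θ, hθ, hθd⟩ : ∃ θ, a / b < θ ∧ θ < d / e :=
    exists_between (by rwa [div_lt_div_iff₀ hb he, mul_comm d])
  have hVlim : Tendsto V atTop (nhds 0) :=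
    LotkaVolterra.predator_tendsto_zero he.le hf.le hV hlogV (by rwa [lt_div_iff₀' he] at hθd)
      (hUlt θ hθ)
  exact ⟨hVlim, tendsto_order.2
    ⟨fun θ => LotkaVolterra.prey_eventually_gt ha hb hU hVlim hlogU, hUlt⟩⟩

/-- Predator extinction and prey convergence to the carrying capacity for the
autonomous Lotka–Volterra predator-prey system when `a e < b d`. -/
theorem lotka_volterra_predator_extinction
    (a b c d e f : ℝ)
    (ha : 0 < a) (hb : 0 < b) (hc : 0 < c) (hd : 0 < d) (he : 0 < e) (hf : 0 < f)
    (hcond : a * e < b * d)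
    (U V : ℝ → ℝ) (hU0 : 0 < U 0) (hV0 : 0 < V 0)
    (hdU : ∀ t, 0 ≤ t →
      HasDerivWithinAt U (U t * (a - b * U t - c * V t)) (Set.Ici 0) t)
    (hdV : ∀ t, 0 ≤ t →
      HasDerivWithinAt V (V t * (-d + e * U t - f * V t)) (Set.Ici 0) t) :
    Tendsto V atTop (nhds 0) ∧ Tendsto U atTop (nhds (a / b)) :=
  lotka_volterra_predator_extinction_general a b c d e f ha hb hc he hf hcond U V hU0 hV0 hdU hdV
end

section
/- Let a, b, c be positive real constants and let w : [0,∞) → ℝ be continuous with w(t) ≥ 0 for all t ≥ 0 and w(t) → 0 as t → ∞. Let u : [0,∞) → ℝ be differentiable with u(0) > 0 and u′(t) = u(t)(a − b·u(t) − c·w(t)) for all t ≥ 0. Then u(t) → a/b as t → ∞. -/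
open Filter Set Topology Real

/-!
Positivity of `u` is preserved because `u' = u · g(t)` is linear in `u` with a locally bounded
coefficient. The reciprocal `v = 1 / u` then solves the linear equation `v' = b - (a - c w(t)) v`,
whose coefficient tends to `a > 0`. Once the coefficient exceeds `κ' < a`, Grönwall's inequality
gives `limsup v ≤ b / κ'`; once it stays below `κ'' > a`, the same argument for `-v` gives
`liminf v ≥ b / κ''`. Hence `v → b / a` and `u → a / b`.
-/

theorem tendsto_gronwallBound_of_neg {δ K ε : ℝ} (hK : K < 0) :
    Tendsto (gronwallBound δ K ε) atTop (𝓝 (-(ε / K))) := by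
  have hexp : Tendsto (fun x => exp (K * x)) atTop (𝓝 0) :=
    tendsto_exp_atBot.comp (tendsto_id.const_mul_atTop_of_neg hK)
  rw [gronwallBound_of_K_ne_0 hK.ne]
  simpa using (hexp.const_mul δ).add ((hexp.sub_const 1).const_mul (ε / K))

theorem pos_of_hasDerivWithinAt_mul_s15 {u g : ℝ → ℝ} {a b : ℝ} (hg : ContinuousOn g (Icc a b))
    (hu : ContinuousOn u (Icc a b))
    (hu' : ∀ t ∈ Ico a b, HasDerivWithinAt u (u t * g t) (Ici t) t) (ha : 0 < u a) :
    ∀ t ∈ Icc a b, 0 < u t := by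
  obtain ⟨M, hM⟩ := isCompact_Icc.exists_bound_of_continuousOn hg
  -- Barrier argument: `-u` cannot cross `-u a · exp (-(M + 1) (t - a))` from below.
  have hE : ∀ t, HasDerivWithinAt (fun t => -u a * exp (-(M + 1) * (t - a)))
      ((M + 1) * u a * exp (-(M + 1) * (t - a))) (Ici t) t := fun t => by
    refine ((((hasDerivAt_id' t).sub_const a).const_mul (-(M + 1))).exp.const_mul
      (-u a)).hasDerivWithinAt.congr_deriv ?_
    ring
  have hbarrier := image_le_of_deriv_right_lt_deriv_boundary' (f := fun t => -u t) hu.neg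
    (fun t ht => (hu' t ht).neg) (by simp) (by fun_prop) (fun t _ => hE t) (fun t ht hut => by
      have hgt : -g t ≤ M := (neg_le_abs _).trans (hM t (Ico_subset_Icc_self ht))
      have hpos : 0 < u a * exp (-(M + 1) * (t - a)) := mul_pos ha (exp_pos _)
      rw [show u t = u a * exp (-(M + 1) * (t - a)) by linarith]
      nlinarith)
  intro t ht
  nlinarith [hbarrier ht, exp_pos (-(M + 1) * (t - a))]

theorem eventually_lt_of_hasDerivWithinAt_le_neg_mul_add {f f' : ℝ → ℝ} {T κ ε η : ℝ}
    (hκ : 0 < κ) (hf : ∀ t ∈ Ici T, HasDerivWithinAt f (f' t) (Ici T) t)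
    (hf' : ∀ᶠ t in atTop, f' t ≤ -κ * f t + ε) (hη : ε / κ < η) :
    ∀ᶠ t in atTop, f t < η := by
  obtain ⟨S, hS⟩ := eventually_atTop.1 hf'
  set T' := max S T
  have hsub : Ici T' ⊆ Ici T := Ici_subset_Ici.2 (le_max_right _ _)
  have hgronwall : ∀ t ∈ Ici T', f t ≤ gronwallBound (f T') (-κ) ε (t - T') := fun t ht =>
    le_gronwallBound_of_liminf_deriv_right_le
      (fun y hy => (hf y (hsub hy.1)).continuousWithinAt.mono (Icc_subset_Ici_self.trans hsub))
      (fun y hy _ hr =>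
        ((hf y (hsub hy.1)).mono (Ici_subset_Ici.2 (hsub hy.1))).liminf_right_slope_le hr)
      le_rfl (fun y hy => hS y ((le_max_left _ _).trans hy.1)) t ⟨ht, le_rfl⟩
  have hlim : Tendsto (fun t => gronwallBound (f T') (-κ) ε (t - T')) atTop (𝓝 (ε / κ)) := by
    simpa [Function.comp_def, ← sub_eq_add_neg, div_neg] using
      (tendsto_gronwallBound_of_neg (δ := f T') (ε := ε) (neg_neg_of_pos hκ)).comp
        (tendsto_atTop_add_const_right atTop (-T') tendsto_id)
  filter_upwards [hlim.eventually (gt_mem_nhds hη), eventually_ge_atTop T'] with t hlt ht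
  exact (hgronwall t ht).trans_lt hlt

theorem tendsto_of_hasDerivWithinAt_sub_mul {v k : ℝ → ℝ} {β κ T : ℝ} (hκ : 0 < κ)
    (hk : Tendsto k atTop (𝓝 κ)) (hv_pos : ∀ t ∈ Ici T, 0 < v t)
    (hv : ∀ t ∈ Ici T, HasDerivWithinAt v (β - k t * v t) (Ici T) t) :
    Tendsto v atTop (𝓝 (β / κ)) := by
  have hdiv : Tendsto (fun κ' => β / κ') (𝓝 κ) (𝓝 (β / κ)) :=
    tendsto_const_nhds.div tendsto_id hκ.ne'
  rw [tendsto_order]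
  constructor
  · intro x hx
    obtain ⟨κ', hxκ', hκκ'⟩ :=
      (((hdiv.eventually (lt_mem_nhds hx)).filter_mono nhdsWithin_le_nhds).and
        (self_mem_nhdsWithin (s := Ioi κ))).exists
    have hκ' : 0 < κ' := hκ.trans hκκ'
    have hbound : ∀ᶠ t in atTop, -(β - k t * v t) ≤ -κ' * -v t + -β := by
      filter_upwards [hk.eventually (gt_mem_nhds hκκ'), eventually_ge_atTop T] with t hkt ht
      nlinarith [hv_pos t ht]
    have hlt := eventually_lt_of_hasDerivWithinAt_le_neg_mul_add hκ'
      (fun t ht => (hv t ht).neg) hbound (η := -x) (by rw [neg_div]; linarith)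
    filter_upwards [hlt] with t ht
    exact neg_lt_neg_iff.1 ht
  · intro x hx
    obtain ⟨κ', ⟨hxκ', hκ'⟩, hκ'κ⟩ :=
      (((hdiv.eventually (gt_mem_nhds hx)).and (lt_mem_nhds hκ)).filter_mono
        nhdsWithin_le_nhds |>.and (self_mem_nhdsWithin (s := Iio κ))).exists
    have hbound : ∀ᶠ t in atTop, β - k t * v t ≤ -κ' * v t + β := by
      filter_upwards [hk.eventually (lt_mem_nhds hκ'κ), eventually_ge_atTop T] with t hkt ht
      nlinarith [hv_pos t ht]
    exact eventually_lt_of_hasDerivWithinAt_le_neg_mul_add hκ' hv hbound hxκ'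

theorem prey_with_vanishing_predation_general
    (a b c : ℝ) (ha : 0 < a) (hb : 0 < b)
    (w : ℝ → ℝ) (hwc : ContinuousOn w (Set.Ici 0))
    (hw_lim : Tendsto w atTop (nhds 0))
    (u : ℝ → ℝ) (hu0 : 0 < u 0)
    (hderiv : ∀ t, 0 ≤ t →
      HasDerivWithinAt u (u t * (a - b * u t - c * w t)) (Set.Ici 0) t) :
    Tendsto u atTop (nhds (a / b)) := by
  have hu_cont : ContinuousOn u (Ici 0) := fun t ht => (hderiv t ht).continuousWithinAt
  have hu_pos : ∀ t ∈ Ici (0 : ℝ), 0 < u t := fun t ht =>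
    pos_of_hasDerivWithinAt_mul_s15 (g := fun s => a - b * u s - c * w s)
      (((continuousOn_const.sub (continuousOn_const.mul hu_cont)).sub
        (continuousOn_const.mul hwc)).mono Icc_subset_Ici_self)
      (hu_cont.mono Icc_subset_Ici_self)
      (fun s hs => (hderiv s hs.1).mono (Ici_subset_Ici.2 hs.1)) hu0 t ⟨ht, le_rfl⟩
  have hv : ∀ t ∈ Ici (0 : ℝ),
      HasDerivWithinAt (fun s => (u s)⁻¹) (b - (a - c * w t) * (u t)⁻¹) (Ici 0) t := by
    intro t ht
    have hut := (hu_pos t ht).ne'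
    refine ((hderiv t ht).inv hut).congr_deriv ?_
    field_simp
    ring
  have hk : Tendsto (fun t => a - c * w t) atTop (𝓝 a) := by
    simpa using (hw_lim.const_mul c).const_sub a
  have hv_lim := tendsto_of_hasDerivWithinAt_sub_mul ha hk (fun t ht => inv_pos.2 (hu_pos t ht)) hv
  simpa using hv_lim.inv₀ (div_pos hb ha).ne'

/-- The prey equation with vanishing nonnegative predation term:
if `w(t) → 0` then the solution of `u' = u(a - b u - c w(t))` with `u(0) > 0`
converges to `a / b`. -/
theorem prey_with_vanishing_predation
    (a b c : ℝ) (ha : 0 < a) (hb : 0 < b) (hc : 0 < c)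
    (w : ℝ → ℝ) (hwc : ContinuousOn w (Set.Ici 0))
    (hw_nn : ∀ t, 0 ≤ t → 0 ≤ w t) (hw_lim : Tendsto w atTop (nhds 0))
    (u : ℝ → ℝ) (hu0 : 0 < u 0)
    (hderiv : ∀ t, 0 ≤ t →
      HasDerivWithinAt u (u t * (a - b * u t - c * w t)) (Set.Ici 0) t) :
    Tendsto u atTop (nhds (a / b)) :=
  prey_with_vanishing_predation_general a b c ha hb w hwc hw_lim u hu0 hderiv
end
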